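/- The second isoperimetric constant over disjoint pairs equals that over 2-partitions: min over pairs of disjoint nonempty subsets Q₁, Q₂ of (1/2)(∂(Q₁)/π(Q₁) + ∂(Q₂)/π(Q₂)) equals min over nonempty proper subsets Q of ∂(Q)/(2π(Q)(1−π(Q))). -/

import Mathlib

open Finset

/-- Outgoing boundary flow `∂(Q) = ∑_{u∈Q, v∉Q} K(u,v)π(u)`. -/
noncomputable def dpart {V : Type*} [Fintype V] [DecidableEq V]
    (K : V → V → ℝ) (π : V → ℝ) (Q : Finset V) : ℝ :=
  ∑ u ∈ Q, ∑ v ∈ Qᶜ, K u v * π u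

/-- `π(Q) = ∑_{u∈Q} π(u)`. -/
noncomputable def pim {V : Type*} (π : V → ℝ) (Q : Finset V) : ℝ :=
  ∑ u ∈ Q, π u

/-- The `n`-th isoperimetric constant: minimum of the mean normalized boundary over
families of `n` pairwise disjoint nonempty subsets of `V`. -/
noncomputable def iotaD {V : Type*} [Fintype V] [DecidableEq V]
    (K : V → V → ℝ) (π : V → ℝ) (n : ℕ) : ℝ :=
  sInf {x : ℝ | ∃ Q : Fin n → Finset V, (∀ i, (Q i).Nonempty) ∧
    Pairwise (Function.onFun Disjoint Q) ∧
    x = (∑ i, dpart K π (Q i) / pim π (Q i)) / n}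

/-- The `n`-th partition isoperimetric constant: minimum of the mean normalized boundary
over partitions of `V` into `n` nonempty parts. -/
noncomputable def iotaP {V : Type*} [Fintype V] [DecidableEq V]
    (K : V → V → ℝ) (π : V → ℝ) (n : ℕ) : ℝ :=
  sInf {x : ℝ | ∃ Q : Fin n → Finset V, (∀ i, (Q i).Nonempty) ∧
    Pairwise (Function.onFun Disjoint Q) ∧
    Finset.univ.biUnion Q = Finset.univ ∧
    x = (∑ i, dpart K π (Q i) / pim π (Q i)) / n}

/-!
Writing `x = ∂(Q)/π(Q)`, the Cheeger ratio of `Q` is `x / (2(1 - π(Q)))`. For disjoint nonempty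
`Q₁, Q₂` with Cheeger ratios at least `m ≥ 0`, this gives
`x₁ + x₂ ≥ 2m(2 - π(Q₁) - π(Q₂)) ≥ 2m`, so every disjoint pair is beaten by one of its two
members. Conversely, stationarity makes the flow balanced, `∂(Q) = ∂(Qᶜ)`, so the pair
`(Q, Qᶜ)` has mean normalized boundary exactly the Cheeger ratio of `Q`.
-/

lemma min_div_le_avg {d₁ d₂ p₁ p₂ : ℝ} (hd₁ : 0 ≤ d₁) (hd₂ : 0 ≤ d₂)
    (hp₁ : 0 < p₁) (hp₂ : 0 < p₂) (hp : p₁ + p₂ ≤ 1) :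
    min (d₁ / (2 * p₁ * (1 - p₁))) (d₂ / (2 * p₂ * (1 - p₂))) ≤ (d₁ / p₁ + d₂ / p₂) / 2 := by
  set m := min (d₁ / (2 * p₁ * (1 - p₁))) (d₂ / (2 * p₂ * (1 - p₂)))
  have hq₁ : 0 < 1 - p₁ := by linarith
  have hq₂ : 0 < 1 - p₂ := by linarith
  have hm : 0 ≤ m := le_min (by positivity) (by positivity)
  have hm_le : ∀ d p : ℝ, 0 < p → 0 < 1 - p → m ≤ d / (2 * p * (1 - p)) →
      2 * m * (1 - p) ≤ d / p := by
    intro d p hp hq h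
    rw [le_div_iff₀ (by positivity)] at h
    rw [le_div_iff₀ hp]
    linarith
  linarith [hm_le d₁ p₁ hp₁ hq₁ (min_le_left _ _), hm_le d₂ p₂ hp₂ hq₂ (min_le_right _ _),
    mul_nonneg hm (sub_nonneg.2 hp)]

lemma pim_pos {V : Type*} {π : V → ℝ} (hπ : ∀ u, 0 < π u) {Q : Finset V} (hQ : Q.Nonempty) :
    0 < pim π Q :=
  sum_pos (fun u _ => hπ u) hQ

section MarkovChain

variable {V : Type*} [Fintype V] [DecidableEq V] {K : V → V → ℝ} {π : V → ℝ}

lemma pim_compl (hπ1 : ∑ u, π u = 1) (Q : Finset V) : pim π Qᶜ = 1 - pim π Q := by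
  rw [pim, pim, ← hπ1, ← sum_compl_add_sum Q π, add_sub_cancel_right]

lemma pim_add_pim_le_one (hπ : ∀ u, 0 ≤ π u) (hπ1 : ∑ u, π u = 1) {Q₁ Q₂ : Finset V}
    (hQ : Disjoint Q₁ Q₂) : pim π Q₁ + pim π Q₂ ≤ 1 := by
  rw [pim, pim, ← sum_union hQ, ← hπ1]
  exact sum_le_sum_of_subset_of_nonneg (subset_univ _) fun u _ _ => hπ u

lemma dpart_nonneg (hK0 : ∀ u v, 0 ≤ K u v) (hπ : ∀ u, 0 ≤ π u) (Q : Finset V) :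
    0 ≤ dpart K π Q :=
  sum_nonneg fun u _ => sum_nonneg fun v _ => mul_nonneg (hK0 u v) (hπ u)

lemma dpart_eq_pim_sub (hK1 : ∀ u, ∑ v, K u v = 1) (Q : Finset V) :
    dpart K π Q = pim π Q - ∑ u ∈ Q, ∑ v ∈ Q, K u v * π u := by
  rw [dpart, pim, ← sum_sub_distrib]
  refine sum_congr rfl fun u _ => ?_
  rw [eq_sub_iff_add_eq, sum_compl_add_sum, ← sum_mul, hK1, one_mul]

lemma dpart_compl_eq_pim_sub (hstat : ∀ v, ∑ u, π u * K u v = π v) (Q : Finset V) :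
    dpart K π Qᶜ = pim π Q - ∑ v ∈ Q, ∑ u ∈ Q, K u v * π u := by
  rw [dpart, compl_compl, sum_comm, pim, ← sum_sub_distrib]
  refine sum_congr rfl fun v _ => ?_
  rw [eq_sub_iff_add_eq, sum_compl_add_sum, ← hstat v]
  exact sum_congr rfl fun u _ => mul_comm _ _

lemma dpart_compl (hK1 : ∀ u, ∑ v, K u v = 1) (hstat : ∀ v, ∑ u, π u * K u v = π v)
    (Q : Finset V) : dpart K π Qᶜ = dpart K π Q := by
  rw [dpart_compl_eq_pim_sub hstat, dpart_eq_pim_sub hK1, sum_comm]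

lemma exists_cheeger_le_of_disjoint (hK0 : ∀ u v, 0 ≤ K u v) (hπ : ∀ u, 0 < π u)
    (hπ1 : ∑ u, π u = 1) {Q₁ Q₂ : Finset V} (hQ₁ : Q₁.Nonempty) (hQ₂ : Q₂.Nonempty)
    (hQ : Disjoint Q₁ Q₂) :
    ∃ Q : Finset V, Q.Nonempty ∧ Q ≠ univ ∧
      dpart K π Q / (2 * pim π Q * (1 - pim π Q)) ≤
        (dpart K π Q₁ / pim π Q₁ + dpart K π Q₂ / pim π Q₂) / 2 := by
  have hQ₁u : Q₁ ≠ univ := by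
    rintro rfl
    exact hQ₂.ne_empty (top_disjoint.mp hQ)
  have hQ₂u : Q₂ ≠ univ := by
    rintro rfl
    exact hQ₁.ne_empty (disjoint_top.mp hQ)
  have hπ0 : ∀ u, 0 ≤ π u := fun u => (hπ u).le
  have hmin := min_div_le_avg (dpart_nonneg hK0 hπ0 Q₁) (dpart_nonneg hK0 hπ0 Q₂)
    (pim_pos hπ hQ₁) (pim_pos hπ hQ₂) (pim_add_pim_le_one hπ0 hπ1 hQ)
  rcases min_le_iff.mp hmin with h | h
  · exact ⟨Q₁, hQ₁, hQ₁u, h⟩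
  · exact ⟨Q₂, hQ₂, hQ₂u, h⟩

lemma avg_compl_eq_cheeger (hK1 : ∀ u, ∑ v, K u v = 1) (hπ : ∀ u, 0 < π u)
    (hπ1 : ∑ u, π u = 1) (hstat : ∀ v, ∑ u, π u * K u v = π v) {Q : Finset V}
    (hQ : Q.Nonempty) (hQc : Qᶜ.Nonempty) :
    (dpart K π Q / pim π Q + dpart K π Qᶜ / pim π Qᶜ) / 2 =
      dpart K π Q / (2 * pim π Q * (1 - pim π Q)) := by
  have hp := pim_pos hπ hQ
  have hpc := pim_pos hπ hQc
  rw [dpart_compl hK1 hstat, pim_compl hπ1] at *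
  field_simp
  ring

end MarkovChain

theorem iotaD_two_eq_cheeger_general {V : Type*} [Fintype V] [DecidableEq V]
    (K : V → V → ℝ) (π : V → ℝ)
    (hK0 : ∀ u v, 0 ≤ K u v) (hK1 : ∀ u, ∑ v, K u v = 1)
    (hπ : ∀ u, 0 < π u) (hπ1 : ∑ u, π u = 1)
    (hstat : ∀ v, ∑ u, π u * K u v = π v) :
    iotaD K π 2 = sInf {x : ℝ | ∃ Q : Finset V, Q.Nonempty ∧ Q ≠ Finset.univ ∧
      x = dpart K π Q / (2 * pim π Q * (1 - pim π Q))} := by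
  refine csInf_eq_csInf_of_forall_exists_le ?_ ?_
  · rintro x ⟨Q, hQne, hdisj, rfl⟩
    obtain ⟨P, hP, hPu, hle⟩ := exists_cheeger_le_of_disjoint hK0 hπ hπ1 (hQne 0) (hQne 1)
      (hdisj zero_ne_one)
    exact ⟨_, ⟨P, hP, hPu, rfl⟩, by simpa [Fin.sum_univ_two] using hle⟩
  · rintro x ⟨Q, hQ, hQu, rfl⟩
    have hQc : Qᶜ.Nonempty := by simpa [nonempty_iff_ne_empty] using hQu
    refine ⟨_, ⟨![Q, Qᶜ], Fin.forall_fin_two.mpr ⟨hQ, hQc⟩, ?_, rfl⟩, ?_⟩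
    · simp [Pairwise, Fin.forall_fin_two, Function.onFun, disjoint_compl_right, disjoint_compl_left]
    · simp [Fin.sum_univ_two, avg_compl_eq_cheeger hK1 hπ hπ1 hstat hQ hQc]

theorem iotaD_two_eq_cheeger {V : Type*} [Fintype V] [DecidableEq V]
    (K : V → V → ℝ) (π : V → ℝ)
    (hK0 : ∀ u v, 0 ≤ K u v) (hK1 : ∀ u, ∑ v, K u v = 1)
    (hπ : ∀ u, 0 < π u) (hπ1 : ∑ u, π u = 1)
    (hstat : ∀ v, ∑ u, π u * K u v = π v)
    (hcard : 2 ≤ Fintype.card V) :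
    iotaD K π 2 = sInf {x : ℝ | ∃ Q : Finset V, Q.Nonempty ∧ Q ≠ Finset.univ ∧
      x = dpart K π Q / (2 * pim π Q * (1 - pim π Q))} :=
  iotaD_two_eq_cheeger_general K π hK0 hK1 hπ hπ1 hstat
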